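/- Let n ≥ 5 and let α, β be semigroup endomorphisms of T_n. Then α L~ β, i.e. for every idempotent semigroup endomorphism η of T_n one has α·η = α if and only if β·η = β, holds if and only if α = β, or neither α nor β is an idempotent different from the identity endomorphism ε (i.e. (α·α = α → α = ε) and (β·β = β → β = ε)). -/

import Mathlib

/-- `s : Fin n → Fin n` is an odd permutation if it is the underlying function of some
permutation of sign `-1`. -/
def IsOddPerm {n : ℕ} (s : Fin n → Fin n) : Prop :=
  ∃ σ : Equiv.Perm (Fin n), Equiv.Perm.sign σ = -1 ∧ ⇑σ = s

/-- `s : Fin n → Fin n` is an even permutation if it is the underlying function of some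
permutation of sign `1`. -/
def IsEvenPerm {n : ℕ} (s : Fin n → Fin n) : Prop :=
  ∃ σ : Equiv.Perm (Fin n), Equiv.Perm.sign σ = 1 ∧ ⇑σ = s

/-- A pair `(t, e)` of elements of `T_n` is permissible if `t ∘ t ∘ t = t` and
`t ∘ e = e ∘ t = e ∘ e = e`. -/
def Permissible {n : ℕ} (t e : Fin n → Fin n) : Prop :=
  t ∘ t ∘ t = t ∧ t ∘ e = e ∧ e ∘ t = e ∧ e ∘ e = e

open Classical in
/-- For a (permissible) pair `(t, e)`, the map `φ_{t,e} : T_n → T_n` sending `s` to `t` if `s`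
is an odd permutation, to `t ∘ t` if `s` is an even permutation, and to `e` if `s` is not
bijective. -/
noncomputable def phi {n : ℕ} (t e : Fin n → Fin n) : (Fin n → Fin n) → (Fin n → Fin n) :=
  fun s => if IsOddPerm s then t else if IsEvenPerm s then t ∘ t else e

/-- `φ : T_n → T_n` is a semigroup endomorphism of `T_n` if `φ (s ∘ s') = φ s ∘ φ s'`
for all `s, s'`. -/
def IsEndo {n : ℕ} (φ : (Fin n → Fin n) → (Fin n → Fin n)) : Prop :=
  ∀ s s' : Fin n → Fin n, φ (s ∘ s') = φ s ∘ φ s'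

/-!
For `n ≥ 5` the endomorphisms of `T_n` that are not injective on `S_n` are exactly those that
factor through the sign-with-zero map `signClass : T_n → {-1, 0, 1}`: their kernel on `S_n` is a
nontrivial normal subgroup, hence contains `A_n`, and they are constant on the singular maps,
which are generated by the permutations and the idempotents of defect one. An idempotent
endomorphism that is injective on `S_n` fixes `S_n` pointwise, hence every constant map, hence
everything: it is `ε`.

So an idempotent `η ≠ ε` factors through `signClass`. If `η` fixes the image of `γ`, then
`signClass` is injective on that image, so `γ` factors as well, and `γ` is idempotent because
every endomorphism of the monoid `{-1, 0, 1}` is. Two such endomorphisms that fix each other's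
image induce endomorphisms of `{-1, 0, 1}` that fix each other's image; these coincide, and then so
do the endomorphisms.
-/

open Equiv Function MulAction

section SelfMaps

variable {α : Type*} [DecidableEq α]

theorem update_id_comp_self {a b : α} (hab : a ≠ b) :
    update id a b ∘ update id a b = update id a b := by
  funext x
  rcases eq_or_ne x a with rfl | hx <;> simp [*, hab.symm]

theorem swap_comp_update_id (a b : α) : swap a b ∘ update id a b = update id b a := by
  funext x
  rcases eq_or_ne x a with rfl | hxa
  · simp [update_apply]
  · rcases eq_or_ne x b with rfl | hxb <;> simp [swap_apply_of_ne_of_ne, *]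

theorem perm_comp_update_id_comp_inv (σ : Perm α) (a b : α) :
    σ ∘ update id a b ∘ ⇑σ⁻¹ = update id (σ a) (σ b) := by
  funext x
  simp only [comp_apply, update_apply, id_eq, Perm.inv_eq_iff_eq]
  split_ifs <;> simp

theorem not_injective_induction [Finite α] {P : (α → α) → Prop}
    (perm_comp : ∀ (σ : Perm α) (a b : α), a ≠ b → P (σ ∘ update id a b))
    (comp : ∀ (g : α → α) (a b : α), a ≠ b → P g → P (g ∘ update id a b))
    (s : α → α) (hs : ¬ Injective s) : P s := by
  obtain ⟨a, b, hsab, hab⟩ : ∃ a b, s a = s b ∧ a ≠ b := by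
    simpa [Injective] using hs
  obtain ⟨c, hc⟩ : ∃ c, c ∉ Set.range s := by
    simpa [Surjective] using mt Finite.injective_iff_surjective.2 hs
  have hs_eq : s = update s a c ∘ update id a b := by
    funext i
    rcases eq_or_ne i a with rfl | hi
    · simp [hab.symm, hsab]
    · simp [hi]
  have hrange : Set.range s ⊂ Set.range (update s a c) := by
    refine (Set.ssubset_iff_of_subset ?_).2 ⟨c, ⟨a, by simp⟩, hc⟩
    rintro _ ⟨i, rfl⟩
    exact ⟨_, (congrFun hs_eq i).symm⟩
  rw [hs_eq]
  by_cases hg : Injective (update s a c)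
  · exact perm_comp (ofBijective _ (Finite.injective_iff_bijective.1 hg)) a b hab
  · exact comp _ a b hab (not_injective_induction perm_comp comp _ hg)
termination_by (Set.range s)ᶜ.ncard
decreasing_by exact Set.ncard_lt_ncard (compl_lt_compl_iff_lt.2 hrange)

theorem eq_id_of_comp_perm_comm (hα : 3 ≤ ENat.card α) {m : α → α}
    (hm : ∀ σ : Perm α, m ∘ σ = σ ∘ m) : m = id := by
  funext k
  by_contra hk
  obtain ⟨j, hjk, hjm⟩ := ENat.exists_ne_ne_of_three_le hα k (m k)
  have := congrFun (hm (swap (m k) j)) k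
  simp [swap_apply_of_ne_of_ne (Ne.symm hk : k ≠ m k) hjk.symm] at this
  exact hjm this.symm

theorem exists_mem_alternatingGroup_apply_eq [Fintype α] (hα : 4 ≤ Nat.card α) {a b c d : α}
    (hab : a ≠ b) (hcd : c ≠ d) : ∃ σ ∈ alternatingGroup α, σ a = c ∧ σ b = d := by
  have := alternatingGroup.isMultiplyPretransitive α
  have : IsMultiplyPretransitive (alternatingGroup α) α 2 :=
    isMultiplyPretransitive_of_le (n := Nat.card α - 2) (by omega) (Nat.sub_le _ _)
  obtain ⟨σ, hσa, hσb⟩ := is_two_pretransitive_iff.1 this hab hcd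
  exact ⟨σ, σ.2, hσa, hσb⟩

end SelfMaps

namespace SignType

theorem mulHom_apply_apply (κ : SignType →ₙ* SignType) (a : SignType) : κ (κ a) = κ a := by
  have key : ∀ f : SignType → SignType, (∀ a b, f (a * b) = f a * f b) → ∀ a, f (f a) = f a := by
    decide
  exact key κ κ.map_mul a

theorem mulHom_eq_of_comp_eq (κ μ : SignType →ₙ* SignType) (hκ : μ.comp κ = κ)
    (hμ : κ.comp μ = μ) : κ = μ := by
  have key : ∀ f g : SignType → SignType, (∀ a b, f (a * b) = f a * f b) →
      (∀ a b, g (a * b) = g a * g b) → (∀ a, g (f a) = f a) → (∀ a, f (g a) = g a) → f = g := by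
    decide
  exact DFunLike.coe_injective (key κ μ κ.map_mul μ.map_mul (DFunLike.congr_fun hκ)
    (DFunLike.congr_fun hμ))

end SignType

section

variable {n : ℕ}

open Classical in
noncomputable def signClass (x : Fin n → Fin n) : SignType :=
  if h : Bijective x then SignType.sign ((Perm.sign (ofBijective x h) : ℤˣ) : ℤ) else 0

theorem signClass_perm (σ : Perm (Fin n)) :
    signClass σ = SignType.sign ((Perm.sign σ : ℤˣ) : ℤ) := by
  rw [signClass, dif_pos σ.bijective,
    show ofBijective σ σ.bijective = σ from Equiv.ext fun _ => rfl]

theorem signClass_eq_zero_iff {x : Fin n → Fin n} : signClass x = 0 ↔ ¬ Bijective x := by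
  by_cases hx : Bijective x
  · lift x to Perm (Fin n) using hx
    rcases Int.units_eq_one_or (Perm.sign x) with h | h <;> simp [signClass_perm, h]
  · simp [signClass]

theorem signClass_comp (x y : Fin n → Fin n) :
    signClass (x ∘ y) = signClass x * signClass y := by
  by_cases hxy : Bijective x ∧ Bijective y
  · obtain ⟨hx, hy⟩ := hxy
    lift x to Perm (Fin n) using hx
    lift y to Perm (Fin n) using hy
    rw [← Perm.coe_mul, signClass_perm, signClass_perm, signClass_perm, map_mul, Units.val_mul,
      sign_mul]
  · have hcomp : ¬ Bijective (x ∘ y) := fun h => hxy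
      ⟨Finite.surjective_iff_bijective.1 h.2.of_comp, Finite.injective_iff_bijective.1 h.1.of_comp⟩
    rw [not_and_or] at hxy
    rcases hxy with h | h <;> simp [signClass_eq_zero_iff.2 hcomp, signClass_eq_zero_iff.2 h]

theorem signClass_perm_eq_iff {σ τ : Perm (Fin n)} :
    signClass σ = signClass τ ↔ Perm.sign σ = Perm.sign τ := by
  rcases Int.units_eq_one_or (Perm.sign σ) with h | h <;>
    rcases Int.units_eq_one_or (Perm.sign τ) with h' | h' <;> simp [signClass_perm, h, h']

theorem signClass_surjective (hn : 2 ≤ n) :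
    Surjective (signClass : (Fin n → Fin n) → SignType) := by
  have := Fin.nontrivial_iff_two_le.2 hn
  obtain ⟨a, b, hab⟩ := exists_pair_ne (Fin n)
  intro c
  cases c
  · refine ⟨update id a b, signClass_eq_zero_iff.2 fun h => hab (h.1 ?_)⟩
    simp [hab.symm]
  · exact ⟨Equiv.swap a b, by rw [signClass_perm, Perm.sign_swap hab]; rfl⟩
  · exact ⟨(1 : Perm (Fin n)), by rw [signClass_perm]; simp⟩

def permKer (φ : (Fin n → Fin n) → (Fin n → Fin n)) : Subgroup (Perm (Fin n)) where
  carrier := {σ | ∀ x, φ (σ ∘ x) = φ x}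
  one_mem' _ := rfl
  mul_mem' {_ τ} hσ hτ x := (hσ (τ ∘ x)).trans (hτ x)
  inv_mem' {σ} hσ x := by simpa [← comp_assoc] using (hσ (⇑σ⁻¹ ∘ x)).symm

namespace IsEndo

variable {φ γ η : (Fin n → Fin n) → (Fin n → Fin n)}

theorem permKer_normal (hφ : IsEndo φ) : (permKer φ).Normal where
  conj_mem σ hσ g x := by
    simp only [Perm.coe_mul, comp_assoc]
    rw [hφ, hσ, ← hφ, ← comp_assoc, ← Perm.coe_mul, mul_inv_cancel, Perm.coe_one, id_comp]

theorem apply_eq_of_sign_eq (hφ : IsEndo φ) (hn : 5 ≤ n)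
    (hφ' : ¬ Injective fun σ : Perm (Fin n) => φ σ) {σ τ : Perm (Fin n)}
    (h : Perm.sign σ = Perm.sign τ) : φ σ = φ τ := by
  have := hφ.permKer_normal
  have hA : alternatingGroup (Fin n) ≤ permKer φ := by
    refine Perm.alternatingGroup_le_of_normal (by simpa) ?_
    obtain ⟨σ₀, τ₀, h₀, hne⟩ : ∃ σ₀ τ₀ : Perm (Fin n), φ σ₀ = φ τ₀ ∧ σ₀ ≠ τ₀ := by
      simpa [Injective] using hφ'
    refine (Subgroup.nontrivial_iff_exists_ne_one _).2
      ⟨σ₀ * τ₀⁻¹, fun x => ?_, mul_inv_eq_one.not.2 hne⟩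
    rw [Perm.coe_mul, comp_assoc, hφ, h₀, ← hφ, ← comp_assoc, ← Perm.coe_mul, mul_inv_cancel,
      Perm.coe_one, id_comp]
  have := hA (Perm.mem_alternatingGroup.2 (show Perm.sign (σ * τ⁻¹) = 1 by simp [h]))
  simpa [comp_assoc] using this τ

theorem apply_update_id_eq (hφ : IsEndo φ) (hn : 5 ≤ n)
    (hφ' : ¬ Injective fun σ : Perm (Fin n) => φ σ) {a b c d : Fin n} (hab : a ≠ b)
    (hcd : c ≠ d) : φ (update id a b) = φ (update id c d) := by
  obtain ⟨σ, hσ, rfl, rfl⟩ := exists_mem_alternatingGroup_apply_eq (by simp; omega) hab hcd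
  have hσ₁ : φ σ = φ id := hφ.apply_eq_of_sign_eq (τ := 1) hn hφ' (by simpa using hσ)
  have hσ₂ : φ ⇑σ⁻¹ = φ id := hφ.apply_eq_of_sign_eq (τ := 1) hn hφ' (by simpa using hσ)
  rw [← perm_comp_update_id_comp_inv, hφ, hφ, hσ₁, hσ₂, ← hφ, ← hφ]
  rfl

theorem apply_eq_of_not_injective (hφ : IsEndo φ) (hn : 5 ≤ n)
    (hφ' : ¬ Injective fun σ : Perm (Fin n) => φ σ) {s : Fin n → Fin n} (hs : ¬ Injective s)
    {a b : Fin n} (hab : a ≠ b) : φ s = φ (update id a b) := by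
  have hupdate {c d : Fin n} (hcd : c ≠ d) : φ (update id c d) = φ (update id a b) :=
    hφ.apply_update_id_eq hn hφ' hcd hab
  refine not_injective_induction (P := fun s => φ s = φ (update id a b)) ?_ ?_ s hs
  · intro σ c d hcd
    obtain ⟨τ, hτ, c', d', hcd', hτcd⟩ : ∃ τ : Perm (Fin n), Perm.sign σ = Perm.sign τ ∧
        ∃ c' d', c' ≠ d' ∧ τ ∘ update id c d = update id c' d' := by
      rcases Int.units_eq_one_or (Perm.sign σ) with h | h
      · exact ⟨1, by simp [h], c, d, hcd, rfl⟩
      · exact ⟨swap c d, by simp [h, hcd], d, c, hcd.symm, swap_comp_update_id c d⟩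
    rw [hφ, hφ.apply_eq_of_sign_eq hn hφ' hτ, ← hφ, hτcd, hupdate hcd']
  · intro g c d hcd hg
    rw [hφ, hg, hupdate hcd, ← hφ, update_id_comp_self hab]

theorem factorsThrough_signClass (hφ : IsEndo φ) (hn : 5 ≤ n)
    (hφ' : ¬ Injective fun σ : Perm (Fin n) => φ σ) : φ.FactorsThrough signClass := by
  intro x y hxy
  by_cases hx : Bijective x
  · have hy : Bijective y := by
      by_contra hy
      rw [← signClass_eq_zero_iff, ← hxy, signClass_eq_zero_iff] at hy
      exact hy hx
    lift x to Perm (Fin n) using hx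
    lift y to Perm (Fin n) using hy
    exact hφ.apply_eq_of_sign_eq hn hφ' (signClass_perm_eq_iff.1 hxy)
  · have hy : ¬ Bijective y := by rwa [← signClass_eq_zero_iff, ← hxy, signClass_eq_zero_iff]
    have := Fin.nontrivial_iff_two_le.2 (by omega : 2 ≤ n)
    obtain ⟨a, b, hab⟩ := exists_pair_ne (Fin n)
    rw [hφ.apply_eq_of_not_injective hn hφ' (mt Finite.injective_iff_bijective.1 hx) hab,
      hφ.apply_eq_of_not_injective hn hφ' (mt Finite.injective_iff_bijective.1 hy) hab]

theorem apply_comp_apply_inv (hφ : IsEndo φ) (σ : Perm (Fin n)) : φ σ ∘ φ ⇑σ⁻¹ = φ id := by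
  rw [← hφ]
  simp

theorem apply_id_eq_id (hφ : IsEndo φ) (hinj : Injective fun σ : Perm (Fin n) => φ σ) :
    φ id = id := by
  set u := φ id
  have hu : ∀ y ∈ Set.range u, u y = y := by
    rintro _ ⟨z, rfl⟩
    exact congrFun (hφ id id).symm z
  have hrange (σ : Perm (Fin n)) (x : Fin n) : φ σ x ∈ Set.range u :=
    ⟨φ σ x, congrFun (hφ id σ).symm x⟩
  have hright (σ : Perm (Fin n)) (x : Fin n) : φ σ (u x) = φ σ x := congrFun (hφ σ id).symm x
  have hinv (σ : Perm (Fin n)) (y : Set.range u) : φ ⇑σ⁻¹ (φ σ y) = y := by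
    simpa using (congrFun (hφ.apply_comp_apply_inv σ⁻¹) y).trans (hu y y.2)
  -- `φ` embeds `S_n` into the symmetric group of `range u`, so `range u` has `n` elements.
  let ρ (σ : Perm (Fin n)) : Perm (Set.range u) :=
    { toFun y := ⟨φ σ y, hrange σ y⟩
      invFun y := ⟨φ ⇑σ⁻¹ y, hrange σ⁻¹ y⟩
      left_inv y := Subtype.ext (hinv σ y)
      right_inv y := Subtype.ext (by simpa using hinv σ⁻¹ y) }
  have hρ : Injective ρ := fun σ τ h => hinj <| funext fun x => by
    have := congrArg (fun π : Perm (Set.range u) => (π ⟨u x, x, rfl⟩ : Fin n)) h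
    simpa [ρ, hright] using this
  have hcard : n ≤ (Set.range u).ncard := by
    have := Nat.card_le_card_of_injective ρ hρ
    rw [Nat.card_perm, Nat.card_perm, Nat.card_coe_set_eq, Nat.card_eq_fintype_card,
      Fintype.card_fin] at this
    by_contra! hlt
    have : 0 < (Set.range u).ncard :=
      (Set.ncard_pos (Set.toFinite _)).2 (Set.range_nonempty_iff_nonempty.2 ⟨⟨0, by omega⟩⟩)
    exact ((Nat.factorial_lt this).2 hlt).not_ge ‹_›
  have : Set.range u = Set.univ :=
    Set.eq_of_subset_of_ncard_le (Set.subset_univ _) (by simpa [Set.ncard_univ] using hcard)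
  funext y
  exact hu y (this ▸ Set.mem_univ y)

theorem apply_perm_eq_self (hφ : IsEndo φ) (hidem : φ ∘ φ = φ)
    (hinj : Injective fun σ : Perm (Fin n) => φ σ) (σ : Perm (Fin n)) : φ σ = σ := by
  have hbij : Bijective (φ σ) := Finite.injective_iff_bijective.1 <|
    LeftInverse.injective (g := φ ⇑σ⁻¹) fun x => by
      simpa [hφ.apply_id_eq_id hinj] using congrFun (hφ.apply_comp_apply_inv σ⁻¹) x
  obtain ⟨π, hπ⟩ : ∃ π : Perm (Fin n), ⇑π = φ σ := ⟨ofBijective _ hbij, rfl⟩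
  have : π = σ := hinj (by simpa [hπ] using congrFun hidem σ)
  rw [← hπ, this]

theorem eq_id_of_apply_perm (hφ : IsEndo φ) (hn : 3 ≤ n)
    (hperm : ∀ σ : Perm (Fin n), φ σ = σ) : φ = id := by
  have hconst (k : Fin n) : φ (const _ k) = const _ (φ (const _ k) k) := by
    funext i
    simpa [hperm] using congrFun (hφ (const _ k) (swap i k)) i
  set m := fun k => φ (const _ k) k
  have hm : m = id := by
    refine eq_id_of_comp_perm_comm (by simpa) fun σ => funext fun k => ?_
    have := congrFun (hφ σ (const _ k)) k
    rw [comp_const, hconst, hperm, hconst] at this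
    exact this
  have hconst' (k : Fin n) : φ (const _ k) = const _ k :=
    (hconst k).trans (congrArg _ (congrFun hm k))
  -- `s` is recovered from the constant maps `s ∘ const k = const (s k)`.
  funext s k
  have := congrFun (hφ s (const _ k)) k
  rw [comp_const, hconst', hconst'] at this
  exact this.symm

theorem eq_id_of_injective (hφ : IsEndo φ) (hn : 3 ≤ n) (hidem : φ ∘ φ = φ)
    (hinj : Injective fun σ : Perm (Fin n) => φ σ) : φ = id :=
  hφ.eq_id_of_apply_perm hn (hφ.apply_perm_eq_self hidem hinj)

theorem factorsThrough_signClass_of_idempotent (hη : IsEndo η) (hn : 5 ≤ n)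
    (hidem : η ∘ η = η) (hne : η ≠ id) : η.FactorsThrough signClass :=
  hη.factorsThrough_signClass hn fun hinj => hne (hη.eq_id_of_injective (by omega) hidem hinj)

theorem factorsThrough_signClass_of_comp_eq_self (hγ : IsEndo γ) (hn : 5 ≤ n)
    (hη : η.FactorsThrough signClass) (h : η ∘ γ = γ) : γ.FactorsThrough signClass := by
  refine hγ.factorsThrough_signClass hn fun hinj => ?_
  have hcard : Fintype.card SignType < Fintype.card (Perm (Fin n)) := by
    rw [Fintype.card_perm, Fintype.card_fin]
    exact (show 3 < 5 by norm_num).trans_le (hn.trans (Nat.self_le_factorial n))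
  obtain ⟨σ, τ, hne, hστ⟩ :=
    Fintype.exists_ne_map_eq_of_card_lt (fun σ : Perm (Fin n) => signClass (γ σ)) hcard
  refine hne (hinj ?_)
  calc γ σ = η (γ σ) := (congrFun h _).symm
    _ = η (γ τ) := hη hστ
    _ = γ τ := congrFun h _

theorem exists_mulHom_signClass_apply (hφ : IsEndo φ) (hn : 2 ≤ n)
    (hf : φ.FactorsThrough signClass) :
    ∃ κ : SignType →ₙ* SignType, ∀ x, signClass (φ x) = κ (signClass x) := by
  obtain ⟨r, hr⟩ := (signClass_surjective hn).hasRightInverse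
  refine ⟨⟨fun c => signClass (φ (r c)), fun a b => ?_⟩,
    fun x => congrArg signClass (hf (hr _).symm)⟩
  have hab : signClass (r (a * b)) = signClass (r a ∘ r b) := by
    rw [signClass_comp, hr, hr, hr]
  rw [← signClass_comp, ← hφ, hf hab]

theorem comp_self_eq_of_comp_eq_self (hγ : IsEndo γ) (hn : 2 ≤ n)
    (hγ' : γ.FactorsThrough signClass) (hη : η.FactorsThrough signClass) (h : η ∘ γ = γ) :
    γ ∘ γ = γ := by
  obtain ⟨κ, hκ⟩ := hγ.exists_mulHom_signClass_apply hn hγ'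
  funext x
  have hx : signClass (γ (γ x)) = signClass (γ x) := by
    rw [hκ, hκ, SignType.mulHom_apply_apply]
  -- `η` fixes the image of `γ` and is constant on the fibres of `signClass`.
  calc γ (γ x) = η (γ (γ x)) := (congrFun h _).symm
    _ = η (γ x) := hη hx
    _ = γ x := congrFun h x

theorem eq_of_comp_eq_self_of_comp_eq_self (hφ : IsEndo φ) (hγ : IsEndo γ) (hn : 2 ≤ n)
    (hφ' : φ.FactorsThrough signClass) (hγ' : γ.FactorsThrough signClass)
    (hφγ : φ ∘ γ = γ) (hγφ : γ ∘ φ = φ) : φ = γ := by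
  obtain ⟨κ, hκ⟩ := hφ.exists_mulHom_signClass_apply hn hφ'
  obtain ⟨μ, hμ⟩ := hγ.exists_mulHom_signClass_apply hn hγ'
  have hκμ : κ = μ := by
    refine SignType.mulHom_eq_of_comp_eq κ μ ?_ ?_ <;> ext c <;>
      obtain ⟨x, rfl⟩ := signClass_surjective hn c
    · rw [MulHom.comp_apply, ← hκ, ← hμ, ← comp_apply (f := γ), hγφ]
    · rw [MulHom.comp_apply, ← hμ, ← hκ, ← comp_apply (f := φ), hφγ]
  have hsc (x) : signClass (φ x) = signClass (γ x) := by rw [hκ, hμ, hκμ]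
  funext x
  have hγx : γ x = φ (φ x) := (congrFun hφγ x).symm.trans (hφ' (hsc x).symm)
  calc φ x = γ (φ x) := (congrFun hγφ x).symm
    _ = γ (γ x) := hγ' (hsc x)
    _ = γ (φ (φ x)) := by rw [← hγx]
    _ = φ (φ x) := congrFun hγφ _
    _ = γ x := hγx.symm

theorem comp_self_eq_of_idempotent_comp_eq_self (hγ : IsEndo γ) (hn : 5 ≤ n) (hη : IsEndo η)
    (hηη : η ∘ η = η) (hη₁ : η ≠ id) (h : η ∘ γ = γ) : γ ∘ γ = γ :=
  have hη' := hη.factorsThrough_signClass_of_idempotent hn hηη hη₁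
  hγ.comp_self_eq_of_comp_eq_self (by omega) (hγ.factorsThrough_signClass_of_comp_eq_self hn hη' h)
    hη' h

theorem comp_eq_self_iff_eq_id (hγ : IsEndo γ) (hn : 5 ≤ n) (hγ' : γ ∘ γ = γ → γ = id)
    (hη : IsEndo η) (hηη : η ∘ η = η) : η ∘ γ = γ ↔ η = id := by
  refine ⟨fun h => ?_, fun h => h ▸ rfl⟩
  by_contra hη₁
  obtain rfl := hγ' (hγ.comp_self_eq_of_idempotent_comp_eq_self hn hη hηη hη₁ h)
  exact hη₁ h

theorem eq_of_forall_idempotent_comp_eq_self_iff (hφ : IsEndo φ) (hγ : IsEndo γ) (hn : 5 ≤ n)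
    (h : ∀ η, IsEndo η → η ∘ η = η → (η ∘ φ = φ ↔ η ∘ γ = γ)) (hφφ : φ ∘ φ = φ)
    (hφ₁ : φ ≠ id) : φ = γ := by
  have hφ' := hφ.factorsThrough_signClass_of_idempotent hn hφφ hφ₁
  have hφγ : φ ∘ γ = γ := (h φ hφ hφφ).1 hφφ
  have hγγ : γ ∘ γ = γ := hγ.comp_self_eq_of_idempotent_comp_eq_self hn hφ hφφ hφ₁ hφγ
  have hγφ : γ ∘ φ = φ := (h γ hγ hγγ).2 hγγ
  exact hφ.eq_of_comp_eq_self_of_comp_eq_self hγ (by omega) hφ'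
    (hγ.factorsThrough_signClass_of_comp_eq_self hn hφ' hφγ) hφγ hγφ

end IsEndo

end

/-- For `n ≥ 5` and semigroup endomorphisms `α`, `β` of `T_n`, one has `α L~ β`
iff `α = β`, or neither `α` nor `β` is an idempotent different from the identity
endomorphism. -/
theorem Ltilde_characterisation (n : ℕ) (hn : 5 ≤ n)
    (α β : (Fin n → Fin n) → (Fin n → Fin n)) (hα : IsEndo α) (hβ : IsEndo β) :
    (∀ η : (Fin n → Fin n) → (Fin n → Fin n), IsEndo η → (fun x => η (η x)) = η →
        ((fun x => η (α x)) = α ↔ (fun x => η (β x)) = β)) ↔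
      (α = β ∨
        (((fun x => α (α x)) = α → α = id) ∧ ((fun x => β (β x)) = β → β = id))) := by
  constructor
  · intro h
    by_cases hα' : α ∘ α = α ∧ α ≠ id
    · exact .inl (hα.eq_of_forall_idempotent_comp_eq_self_iff hβ hn h hα'.1 hα'.2)
    by_cases hβ' : β ∘ β = β ∧ β ≠ id
    · exact .inl (hβ.eq_of_forall_idempotent_comp_eq_self_iff hα hn
        (fun η hη hηη => (h η hη hηη).symm) hβ'.1 hβ'.2).symm
    exact .inr ⟨fun hαα => not_not.1 fun hα₁ => hα' ⟨hαα, hα₁⟩,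
      fun hββ => not_not.1 fun hβ₁ => hβ' ⟨hββ, hβ₁⟩⟩
  · rintro (rfl | ⟨hα', hβ'⟩) η hη hηη
    · rfl
    · exact (hα.comp_eq_self_iff_eq_id hn hα' hη hηη).trans
        (hβ.comp_eq_self_iff_eq_id hn hβ' hη hηη).symm
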